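/- Let ℓ ≥ 1 be an integer. Then |F_1^m(Λ_ℓ)| = C(ℓ, m) for 0 ≤ m ≤ ℓ; and for odd ℓ, |F_1^m(Δ_ℓ)| = C(ℓ+1, m) for 0 ≤ m ≤ ℓ+1. -/

import Mathlib

open scoped BigOperators

/-- A partition, represented canonically as the multiset of its (positive) parts. -/
structure Ptn where
  parts : Multiset ℕ
  pos : ∀ x ∈ parts, 0 < x

namespace Ptn

/-- Build a partition from an arbitrary multiset of naturals by discarding zero parts. -/
def of (s : Multiset ℕ) : Ptn :=
  ⟨s.filter (fun x => 0 < x), fun _ hx => (Multiset.mem_filter.mp hx).2⟩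

/-- The empty partition. -/
def empty : Ptn := ⟨0, by simp⟩

/-- The `i`-th largest part (`0`-indexed); `0` if `i` is at least the number of parts. -/
def part (l : Ptn) (i : ℕ) : ℕ :=
  ((l.parts.sort (· ≤ ·)).reverse).getD i 0

/-- The number of (positive) parts. -/
def length (l : Ptn) : ℕ := Multiset.card l.parts

/-- The size `|λ|`, i.e. the number being partitioned. -/
def size (l : Ptn) : ℕ := l.parts.sum

/-- A partition is strict if all its parts are distinct. -/
def Strict (l : Ptn) : Prop := l.parts.Nodup

/-- The conjugate partition. -/
def conj (l : Ptn) : Ptn :=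
  of ((Multiset.range (l.part 0)).map
    (fun j => Multiset.card (l.parts.filter (fun x => j < x))))

end Ptn

/-- The rectangular partition `□(n,m)` with `n` rows of length `m`. -/
def rect (n m : ℕ) : Ptn := Ptn.of (Multiset.replicate n m)

/-- The partition obtained by multiplying every part by `r`. -/
def scaleP (r : ℕ) (l : Ptn) : Ptn := Ptn.of (l.parts.map (fun a => r * a))

/-- Diagram containment: every part of `small` is at most the corresponding part of `big`. -/
def Contains (big small : Ptn) : Prop := ∀ i, small.part i ≤ big.part i

/-- The beta-set (first-column hook lengths) `{λ_i + m - 1 - i : i < m}` of `l`,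
computed with `m` beads (`m` at least the number of parts). -/
def betaSet (l : Ptn) (m : ℕ) : Finset ℕ :=
  (Finset.range m).image (fun i => l.part i + (m - 1 - i))

/-- The partition encoded by a finite set of bead positions: each bead contributes a part
equal to the number of empty positions (holes) below it. -/
def ptnOfBeads (B : Finset ℕ) : Ptn :=
  Ptn.of (B.val.map (fun p => p - (B.filter (fun q => q < p)).card))

/-- Levels of the beads on runner `k` of the `r`-abacus of `l`,
drawn with `r * l.length` beads (a multiple of `r`). -/
def runnerLevels (r : ℕ) (l : Ptn) (k : ℕ) : Finset ℕ :=
  (Finset.range (l.part 0 + r * l.length + 1)).filter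
    (fun s => r * s + k ∈ betaSet l (r * l.length))

/-- The `k`-th component `λ[k]` of the `r`-quotient of `l`. -/
def quotP (r : ℕ) (l : Ptn) (k : ℕ) : Ptn := ptnOfBeads (runnerLevels r l k)

/-- The `r`-core of `l`: push all beads of the `r`-abacus down as far as possible. -/
def coreP (r : ℕ) (l : Ptn) : Ptn :=
  ptnOfBeads ((Finset.range r).biUnion
    (fun k => (Finset.range (runnerLevels r l k).card).image (fun s => r * s + k)))

/-- The key of the bead at position `p` for the `r`-numbering of the beads `B`:
a bead which is the `j`-th lowest bead on runner `k` gets key `r * j + k`. -/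
def rKey (r : ℕ) (B : Finset ℕ) (p : ℕ) : ℕ :=
  r * (B.filter (fun q => q % r = p % r ∧ q < p)).card + p % r

/-- The number of inversions between the natural (increasing-position) numbering of the
beads `B` and the numbering by increasing `key`. -/
def inversions (key : ℕ → ℕ) (B : Finset ℕ) : ℕ :=
  ((B ×ˢ B).filter (fun pq => pq.1 < pq.2 ∧ key pq.2 < key pq.1)).card

/-- Exponent of the `r`-sign `δ_r`. -/
def rSignExp (r : ℕ) (l : Ptn) : ℕ :=
  inversions (rKey r (betaSet l (r * l.length))) (betaSet l (r * l.length))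

/-- The `r`-sign `δ_r(λ) ∈ {±1}`. -/
def rSign (r : ℕ) (l : Ptn) : ℤ := (-1) ^ rSignExp r l

/-- The key of the bead at position `p` for the `3`-bar numbering of the beads `B` of the
`3`-bar abacus: first the beads of runner `0` in increasing order, then the pairs of beads
on runners `2` and `1` paired off by increasing level (runner-`2` bead before
runner-`1` bead), then the remaining unpaired beads in increasing order. -/
def barKey (B : Finset ℕ) (p : ℕ) : ℕ :=
  let n0 := (B.filter (fun q => q % 3 = 0)).card
  let t := min ((B.filter (fun q => q % 3 = 1)).card)
              ((B.filter (fun q => q % 3 = 2)).card)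
  let rk := (B.filter (fun q => q % 3 = p % 3 ∧ q < p)).card
  if p % 3 = 0 then rk
  else if rk < t then (if p % 3 = 2 then n0 + 2 * rk else n0 + 2 * rk + 1)
  else n0 + 2 * t + (rk - t)

/-- Exponent of the `3`-bar sign `δ̄_3`.  The beads of the `3`-bar abacus of a strict
partition sit at the positions given by the parts. -/
def barSignExp (l : Ptn) : ℕ :=
  inversions (barKey l.parts.toFinset) l.parts.toFinset

/-- The `3`-bar sign `δ̄_3(λ) ∈ {±1}` of a strict partition. -/
def barSign3 (l : Ptn) : ℤ := (-1) ^ barSignExp l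

/-- The double `D(λ) = (λ_1,…,λ_l | λ_1 - 1,…,λ_l - 1)` (Frobenius notation)
of a strict partition `λ`, constructed row by row. -/
noncomputable def double (l : Ptn) : Ptn :=
  Ptn.of ((Multiset.range (l.length + l.part 0)).map (fun i =>
    (if i < l.length then l.part i + 1 else 0) +
      ((Finset.range (min i l.length)).filter (fun j => i + 1 ≤ j + l.part j)).card))

/-- The second component `λ^b[1] = D(λ)[1]` of the `3`-bar quotient of a strict
partition `λ`. -/
noncomputable def barQuot1 (l : Ptn) : Ptn := quotP 3 (double l) 1

/-- The staircase-like strict partition `Λ_ℓ = (3ℓ-2, 3ℓ-5, …, 7, 4, 1)`. -/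
def LamP (ℓ : ℕ) : Ptn := Ptn.of ((Multiset.range ℓ).map (fun i => 3 * i + 1))

/-- The staircase partition `Δ_ℓ = (ℓ, ℓ-1, …, 1)`. -/
def DelP (ℓ : ℕ) : Ptn := Ptn.of (Multiset.range (ℓ + 1))

/-- `F_1^m(Λ_ℓ)`: strict partitions obtained from `Λ_ℓ` by adding `m` cells, each
labelled `1`, where the cell in (0-indexed) column `j` is labelled `1` iff `j % 3 = 1`
(each row reads `0,1,0,0,1,0,…`). -/
def F1Lam (ℓ m : ℕ) : Set Ptn :=
  {mu | mu.Strict ∧ Contains mu (LamP ℓ) ∧ mu.size = (LamP ℓ).size + m ∧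
    ∀ i j, (LamP ℓ).part i ≤ j → j < mu.part i → j % 3 = 1}

/-- `F_1^m(Δ_ℓ)`: partitions obtained from `Δ_ℓ` by adding `m` cells, each labelled `1`,
where the cell `(i,j)` is labelled `1` iff `i + j` is odd. -/
def F1Del (ℓ m : ℕ) : Set Ptn :=
  {mu | Contains mu (DelP ℓ) ∧ mu.size = (DelP ℓ).size + m ∧
    ∀ i j, (DelP ℓ).part i ≤ j → j < mu.part i → (i + j) % 2 = 1}

/-- `(α, β)` is complementary relative to the rectangle `□(n,m)`:
`α ⊆ □(n,m)` and `β_i = m - α_{n+1-i}` for `1 ≤ i ≤ n` (0-indexed below). -/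
def Complementary (n m : ℕ) (a b : Ptn) : Prop :=
  a.length ≤ n ∧ a.part 0 ≤ m ∧ b.length ≤ n ∧
    ∀ i < n, b.part i = m - a.part (n - 1 - i)

/-- `W(n,m)`: the set of `(n,m)`-balanced partitions, i.e. partitions of `2nm` with at
most `2n` parts satisfying `μ_i + μ_{2n+1-i} = 2m` for `1 ≤ i ≤ n` (0-indexed below). -/
def W (n m : ℕ) : Set Ptn :=
  {mu | mu.size = 2 * n * m ∧ mu.length ≤ 2 * n ∧
    ∀ i < n, mu.part i + mu.part (2 * n - 1 - i) = 2 * m}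

/-! ### The ring of symmetric functions

We realise the ring of symmetric functions (with rational coefficients) as the
polynomial ring `ℚ[p_1, p_2, …]` in the power sums: the variable `X n` of
`MvPolynomial ℕ ℚ` stands for the power sum `p_{n+1}`. -/

abbrev SymF := MvPolynomial ℕ ℚ

open MvPolynomial

/-- `z_ρ = ∏ a^{m_a} m_a!` for a partition given as a multiset `ρ`. -/
def zval (s : Multiset ℕ) : ℚ :=
  s.toFinset.prod (fun a => (a : ℚ) ^ s.count a * (Nat.factorial (s.count a) : ℚ))

/-- The power sum product `p_ρ` of a multiset `ρ`. -/
noncomputable def pMult (s : Multiset ℕ) : SymF :=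
  (s.map (fun a => (X (a - 1) : SymF))).prod

/-- The complete homogeneous symmetric function `h_n = Σ_{ρ ⊢ n} z_ρ⁻¹ p_ρ`. -/
noncomputable def hSym (n : ℕ) : SymF :=
  ∑ ρ : Nat.Partition n, (zval ρ.parts)⁻¹ • pMult ρ.parts

/-- `h_k` for an integer index, vanishing for negative `k`. -/
noncomputable def hz (k : ℤ) : SymF := if k < 0 then 0 else hSym k.toNat

/-- The Schur function `S_λ`, via the Jacobi–Trudi formula
`S_λ = det(h_{λ_i - i + j})`. -/
noncomputable def schur (l : Ptn) : SymF :=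
  Matrix.det (Matrix.of (fun i j : Fin l.length =>
    hz ((l.part i.val : ℤ) + (j.val : ℤ) - (i.val : ℤ))))

/-- The plethysm `p_r ∘ f`: the algebra endomorphism sending each power sum `p_k`
to `p_{rk}`, i.e. substituting `x_i^r` for each variable `x_i`. -/
noncomputable def pleth (r : ℕ) (f : SymF) : SymF :=
  MvPolynomial.aeval (fun n => (X (r * (n + 1) - 1) : SymF)) f

/-- The `z`-weight of a power-sum monomial (exponent vector `d`). -/
def zfac (d : ℕ →₀ ℕ) : ℚ :=
  d.prod (fun i e => ((i : ℚ) + 1) ^ e * (Nat.factorial e : ℚ))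

/-- The Hall inner product, for which `⟨p_ρ, p_σ⟩ = δ_{ρσ} z_ρ` and the Schur
functions are orthonormal. -/
noncomputable def hall (f g : SymF) : ℚ :=
  f.support.sum (fun d => f.coeff d * g.coeff d * zfac d)

/-- The multi-Littlewood–Richardson coefficient `LR^λ_{μ^0,…,μ^{r-1}}`:
the multiplicity of `S_λ` in `S_{μ^0} ⋯ S_{μ^{r-1}}`. -/
noncomputable def LRmulti (lam : Ptn) (r : ℕ) (q : ℕ → Ptn) : ℚ :=
  hall ((Finset.range r).prod (fun k => schur (q k))) (schur lam)

/-- The Littlewood–Richardson coefficient `LR^λ_{α,β}`: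
the multiplicity of `S_λ` in `S_α · S_β`. -/
noncomputable def LR2 (lam a b : Ptn) : ℚ := hall (schur a * schur b) (schur lam)

/-- The irreducible symmetric group character `χ^μ(ρ)`, via the Frobenius formula
`χ^μ_ρ = ⟨S_μ, p_ρ⟩`. -/
noncomputable def chi (mu rho : Ptn) : ℚ := hall (schur mu) (pMult rho.parts)

/-- Symmetric functions in two alphabets `u`, `v`: `X (inl n)` is `p_{n+1}(u)` and
`X (inr n)` is `p_{n+1}(v)`. -/
abbrev SymF2 := MvPolynomial (ℕ ⊕ ℕ) ℚ

/-- `f ↦ f(u)`. -/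
noncomputable def toU : SymF →ₐ[ℚ] SymF2 :=
  aeval (fun n => (X (Sum.inl n) : SymF2))

/-- `f ↦ f(v)`. -/
noncomputable def toV : SymF →ₐ[ℚ] SymF2 :=
  aeval (fun n => (X (Sum.inr n) : SymF2))

/-- `f ↦ f(u - v)`, the difference of alphabets: `p_k ↦ p_k(u) - p_k(v)`. -/
noncomputable def toUV : SymF →ₐ[ℚ] SymF2 :=
  aeval (fun n => (X (Sum.inl n) : SymF2) - X (Sum.inr n))

/-!
In `Λ_ℓ` every row ends just before a column labelled `1`, which is followed by a column
labelled `0`, and the first column is labelled `0`. So a partition of `F_1^m(Λ_ℓ)` arises from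
`Λ_ℓ` by adding one cell to each of `m` freely chosen rows among the `ℓ` rows; since the
rows of `Λ_ℓ` differ by `3`, strictness is automatic. For odd `ℓ` the cell to the right of
row `i ≤ ℓ` of `Δ_ℓ` lies on the odd diagonal `i + j = ℓ` and the next one on an even
diagonal, while row `ℓ + 1` starts on an even diagonal: now one cell is added to each of `m`
of the `ℓ + 1` rows. In both cases the rows of the base strictly decrease, so every choice
of rows gives a partition, and the count is a binomial coefficient.
-/

lemma List.getD_filter_pos {L : List ℕ} (hL : L.Pairwise (· ≥ ·)) (i : ℕ) :
    (L.filter (0 < ·)).getD i 0 = L.getD i 0 := by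
  induction L generalizing i with
  | nil => rfl
  | cons a t ih =>
    obtain ⟨ha, ht⟩ := List.pairwise_cons.mp hL
    rcases Nat.eq_zero_or_pos a with rfl | ha0
    · have hzero : ∀ x ∈ 0 :: t, x = 0 := by
        simpa using fun x hx => Nat.le_zero.mp (ha x hx)
      rw [List.filter_eq_nil_iff.mpr fun x hx => by simp [hzero x hx],
        List.eq_replicate_iff.mpr ⟨rfl, hzero⟩]
      simp
    · rw [List.filter_cons_of_pos (by simpa using ha0)]
      cases i with
      | zero => rfl
      | succ n => exact ih ht n

namespace Ptn

lemma length_sort_reverse (l : Ptn) : (l.parts.sort (· ≤ ·)).reverse.length = l.length := by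
  rw [List.length_reverse, Multiset.length_sort]; rfl

lemma parts_eq_map_part (l : Ptn) : l.parts = (Multiset.range l.length).map l.part := by
  conv_lhs => rw [← Multiset.sort_eq l.parts (· ≤ ·), ← Multiset.coe_reverse]
  rw [Multiset.range, Multiset.map_coe]
  congr 1
  refine List.ext_getElem (by rw [length_sort_reverse, List.length_map, List.length_range])
    fun i h _ => ?_
  rw [List.getElem_map, List.getElem_range, part, List.getD_eq_getElem _ _ h]

lemma lt_length_iff {l : Ptn} {i : ℕ} : i < l.length ↔ 0 < l.part i := by
  refine ⟨fun h => l.pos _ ?_, fun h => not_le.mp fun h' => h.ne' ?_⟩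
  · rw [parts_eq_map_part]
    exact Multiset.mem_map_of_mem _ (Multiset.mem_range.mpr h)
  · rw [part, List.getD_eq_default _ _ (by rwa [length_sort_reverse])]

lemma part_eq_zero_iff {l : Ptn} {i : ℕ} : l.part i = 0 ↔ l.length ≤ i := by
  rw [← not_lt, lt_length_iff, Nat.pos_iff_ne_zero, not_not]

lemma ext_part {l l' : Ptn} (h : ∀ i, l.part i = l'.part i) : l = l' := by
  have hlen : l.length = l'.length := le_antisymm
    (part_eq_zero_iff.mp (by rw [h, part_eq_zero_iff]))
    (part_eq_zero_iff.mp (by rw [← h, part_eq_zero_iff]))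
  have hparts : l.parts = l'.parts := by
    rw [parts_eq_map_part l, parts_eq_map_part l', hlen, funext h]
  cases l; cases l'; cases hparts; rfl

lemma strict_of_strictAntiOn {l : Ptn} (h : StrictAntiOn l.part (Set.Iio l.length)) :
    l.Strict := by
  rw [Strict, parts_eq_map_part]
  exact (Multiset.nodup_range _).map_on fun i hi j hj hij =>
    h.injOn (Multiset.mem_range.mp hi) (Multiset.mem_range.mp hj) hij

lemma size_eq_sum_part {l : Ptn} {n : ℕ} (h : l.length ≤ n) :
    l.size = ∑ i ∈ Finset.range n, l.part i := by
  rw [size, parts_eq_map_part]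
  exact Finset.sum_subset (Finset.range_subset_range.mpr h) fun i _ hi =>
    part_eq_zero_iff.mpr (not_lt.mp (mt Finset.mem_range.mpr hi))

lemma size_of (s : Multiset ℕ) : (of s).size = s.sum := by
  conv_rhs => rw [← Multiset.sum_filter_add_sum_filter_not (fun x => 0 < x)]
  rw [Multiset.sum_eq_zero (s := s.filter _)
    fun x hx => Nat.eq_zero_of_not_pos (Multiset.mem_filter.mp hx).2, add_zero]
  rfl

lemma part_of_pairwise {L : List ℕ} (hL : L.Pairwise (· ≥ ·)) (i : ℕ) :
    (of ↑L).part i = L.getD i 0 := by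
  have hparts : (of ↑L).parts = ↑(L.filter (0 < ·)) := by simp [of, Multiset.filter_coe]
  have hsort : ((of ↑L).parts.sort (· ≤ ·)).reverse = L.filter (0 < ·) := by
    refine List.Perm.eq_of_pairwise' (List.pairwise_reverse.mpr (Multiset.pairwise_sort _ _))
      (hL.filter _) (Multiset.coe_eq_coe.mp ?_)
    rw [Multiset.coe_reverse, Multiset.sort_eq, hparts]
  rw [part, hsort, List.getD_filter_pos hL]

lemma part_of_antitoneOn {f : ℕ → ℕ} {n : ℕ} (hf : AntitoneOn f (Set.Iio n)) (i : ℕ) :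
    (of ((Multiset.range n).map f)).part i = if i < n then f i else 0 := by
  have hL : ((List.range n).map f).Pairwise (· ≥ ·) :=
    List.pairwise_map.mpr <| List.pairwise_lt_range.imp_of_mem fun ha hb hab =>
      hf (List.mem_range.mp ha) (List.mem_range.mp hb) hab.le
  rw [Multiset.range, Multiset.map_coe, part_of_pairwise hL]
  split_ifs with hi
  · simp [hi]
  · exact List.getD_eq_default _ _ (by simpa using hi)

lemma part_of_monotoneOn {f : ℕ → ℕ} {n : ℕ} (hf : MonotoneOn f (Set.Iio n)) (i : ℕ) :
    (of ((Multiset.range n).map f)).part i = if i < n then f (n - 1 - i) else 0 := by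
  have hL : ((List.range n).map f).reverse.Pairwise (· ≥ ·) :=
    List.pairwise_reverse.mpr <| List.pairwise_map.mpr <| List.pairwise_lt_range.imp_of_mem
      fun ha hb hab => hf (List.mem_range.mp ha) (List.mem_range.mp hb) hab.le
  rw [Multiset.range, Multiset.map_coe, ← Multiset.coe_reverse, part_of_pairwise hL]
  split_ifs with hi
  · rw [List.getD_reverse _ (by simpa using hi)]
    simp [show n - 1 - i < n by omega]
  · exact List.getD_eq_default _ _ (by simpa using hi)

def addCells (base : Ptn) (n : ℕ) (S : Finset ℕ) : Ptn :=
  of ((Multiset.range n).map fun i => base.part i + if i ∈ S then 1 else 0)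

def oneCellExtensions (base : Ptn) (n m : ℕ) : Set Ptn :=
  {mu | mu.size = base.size + m ∧
    ∀ i, mu.part i = base.part i ∨ i < n ∧ mu.part i = base.part i + 1}

section OneCellExtensions

variable {base : Ptn} {n : ℕ}

lemma part_addCells (hlen : base.length ≤ n) (hb : StrictAntiOn base.part (Set.Iio n))
    {S : Finset ℕ} (hS : S ⊆ Finset.range n) (i : ℕ) :
    (base.addCells n S).part i = base.part i + if i ∈ S then 1 else 0 := by
  have hf : AntitoneOn (fun i => base.part i + if i ∈ S then 1 else 0) (Set.Iio n) :=
    fun a ha b hb' hab => by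
      rcases hab.lt_or_eq with hab | rfl
      · have := hb ha hb' hab
        dsimp only
        split_ifs <;> omega
      · rfl
  rw [addCells, part_of_antitoneOn hf]
  by_cases hi : i < n
  · rw [if_pos hi]
  · have hiS : i ∉ S := fun h => hi (Finset.mem_range.mp (hS h))
    rw [if_neg hi, if_neg hiS, part_eq_zero_iff.mpr (by omega)]

lemma size_addCells (hlen : base.length ≤ n) {S : Finset ℕ} (hS : S ⊆ Finset.range n) :
    (base.addCells n S).size = base.size + S.card := by
  rw [addCells, size_of, Multiset.sum_map_add, size_eq_sum_part hlen]
  congr 1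
  change ∑ i ∈ Finset.range n, (if i ∈ S then 1 else 0) = S.card
  rw [Finset.sum_boole, Finset.filter_mem_eq_inter, Finset.inter_eq_right.mpr hS, Nat.cast_id]

lemma ncard_oneCellExtensions (hlen : base.length ≤ n) (hb : StrictAntiOn base.part (Set.Iio n))
    (m : ℕ) : (oneCellExtensions base n m).ncard = n.choose m := by
  classical
  have himage : oneCellExtensions base n m =
      (Finset.powersetCard m (Finset.range n)).image (base.addCells n) := by
    ext mu
    simp only [Finset.coe_image, Set.mem_image, Finset.mem_coe, Finset.mem_powersetCard]
    constructor
    · rintro ⟨hsize, hrows⟩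
      set S := (Finset.range n).filter fun i => mu.part i = base.part i + 1
      have hS : S ⊆ Finset.range n := Finset.filter_subset _ _
      have hmu : base.addCells n S = mu := ext_part fun i => by
        rw [part_addCells hlen hb hS]
        rcases hrows i with h | ⟨hi, h⟩
        · rw [if_neg (by simp [S, h]), h, add_zero]
        · rw [if_pos (by simp [S, hi, h]), h]
      refine ⟨S, ⟨hS, ?_⟩, hmu⟩
      have := size_addCells hlen hS
      rw [hmu] at this
      omega
    · rintro ⟨S, ⟨hS, rfl⟩, rfl⟩
      refine ⟨size_addCells hlen hS, fun i => ?_⟩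
      rw [part_addCells hlen hb hS]
      by_cases hi : i ∈ S
      · exact Or.inr ⟨Finset.mem_range.mp (hS hi), if_pos hi ▸ rfl⟩
      · exact Or.inl (by simp [hi])
  rw [himage, Set.ncard_coe_finset, Finset.card_image_of_injOn, Finset.card_powersetCard,
    Finset.card_range]
  intro S hS T hT hST
  simp only [Finset.mem_coe, Finset.mem_powersetCard] at hS hT
  ext i
  have := congrArg (part · i) hST
  simp only [part_addCells hlen hb hS.1, part_addCells hlen hb hT.1] at this
  split_ifs at this <;> simp_all

end OneCellExtensions

end Ptn

open Ptn

lemma part_LamP (ℓ i : ℕ) : (LamP ℓ).part i = if i < ℓ then 3 * (ℓ - 1 - i) + 1 else 0 :=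
  part_of_monotoneOn (fun _ _ _ _ h => by omega) i

lemma part_DelP (ℓ i : ℕ) : (DelP ℓ).part i = ℓ - i := by
  rw [DelP, ← Multiset.map_id' (Multiset.range _),
    part_of_monotoneOn (f := fun x => x) (fun _ _ _ _ h => h)]
  split_ifs <;> omega

lemma length_LamP_le (ℓ : ℕ) : (LamP ℓ).length ≤ ℓ :=
  part_eq_zero_iff.mp (by simp [part_LamP])

lemma strictAntiOn_part_LamP (ℓ : ℕ) : StrictAntiOn (LamP ℓ).part (Set.Iio ℓ) :=
  fun i hi j hj hij => by
    rw [Set.mem_Iio] at hi hj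
    rw [part_LamP, part_LamP, if_pos hi, if_pos hj]
    omega

lemma length_DelP_le (ℓ : ℕ) : (DelP ℓ).length ≤ ℓ + 1 :=
  part_eq_zero_iff.mp (by simp [part_DelP])

lemma strictAntiOn_part_DelP (ℓ : ℕ) : StrictAntiOn (DelP ℓ).part (Set.Iio (ℓ + 1)) :=
  fun i _ j hj hij => by
    rw [Set.mem_Iio] at hj
    rw [part_DelP, part_DelP]
    omega

lemma F1Lam_eq_oneCellExtensions (ℓ m : ℕ) : F1Lam ℓ m = oneCellExtensions (LamP ℓ) ℓ m := by
  ext mu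
  constructor
  · rintro ⟨-, hcont, hsize, hlabel⟩
    refine ⟨hsize, fun i => ?_⟩
    have hge := hcont i
    have hnext := hlabel i ((LamP ℓ).part i)
    have hnext' := hlabel i ((LamP ℓ).part i + 1)
    have hbase := part_LamP ℓ i
    split_ifs at hbase <;> omega
  · rintro ⟨hsize, hrows⟩
    refine ⟨strict_of_strictAntiOn fun i _ j hj hij => ?_, fun i => ?_, hsize,
      fun i j hj hj' => ?_⟩
    · have hpos := lt_length_iff.mp hj
      have hrow := hrows i
      have hrow' := hrows j
      have hbase := part_LamP ℓ i
      have hbase' := part_LamP ℓ j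
      split_ifs at hbase hbase' <;> omega
    · rcases hrows i with h | ⟨-, h⟩ <;> omega
    · have hrow := hrows i
      have hbase := part_LamP ℓ i
      split_ifs at hbase <;> omega

lemma F1Del_eq_oneCellExtensions {ℓ : ℕ} (hℓ : Odd ℓ) (m : ℕ) :
    F1Del ℓ m = oneCellExtensions (DelP ℓ) (ℓ + 1) m := by
  have hℓ2 := Nat.odd_iff.mp hℓ
  ext mu
  constructor
  · rintro ⟨hcont, hsize, hlabel⟩
    have hlen : mu.length ≤ ℓ + 1 := part_eq_zero_iff.mp <| by
      have hfirst := hlabel (ℓ + 1) 0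
      rw [part_DelP] at hfirst
      omega
    refine ⟨hsize, fun i => ?_⟩
    have hge := hcont i
    have hnext := hlabel i ((DelP ℓ).part i)
    have hnext' := hlabel i ((DelP ℓ).part i + 1)
    have hzero : ℓ + 1 ≤ i → mu.part i = 0 := fun hi => part_eq_zero_iff.mpr (hlen.trans hi)
    have hbase := part_DelP ℓ i
    omega
  · rintro ⟨hsize, hrows⟩
    refine ⟨fun i => ?_, hsize, fun i j hj hj' => ?_⟩
    · rcases hrows i with h | ⟨-, h⟩ <;> omega
    · have hrow := hrows i
      have hbase := part_DelP ℓ i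
      omega

theorem stmt16_general (ℓ : ℕ) :
    (∀ m ≤ ℓ, (F1Lam ℓ m).ncard = Nat.choose ℓ m) ∧
    (Odd ℓ → ∀ m ≤ ℓ + 1, (F1Del ℓ m).ncard = Nat.choose (ℓ + 1) m) := by
  refine ⟨fun m _ => ?_, fun hℓ m _ => ?_⟩
  · rw [F1Lam_eq_oneCellExtensions,
      ncard_oneCellExtensions (length_LamP_le ℓ) (strictAntiOn_part_LamP ℓ)]
  · rw [F1Del_eq_oneCellExtensions hℓ,
      ncard_oneCellExtensions (length_DelP_le ℓ) (strictAntiOn_part_DelP ℓ)]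

/-- `|F_1^m(Λ_ℓ)| = C(ℓ,m)` for `0 ≤ m ≤ ℓ`, and for odd `ℓ`,
`|F_1^m(Δ_ℓ)| = C(ℓ+1,m)` for `0 ≤ m ≤ ℓ+1`. -/
theorem stmt16 (ℓ : ℕ) (hℓ : 1 ≤ ℓ) :
    (∀ m ≤ ℓ, (F1Lam ℓ m).ncard = Nat.choose ℓ m) ∧
    (Odd ℓ → ∀ m ≤ ℓ + 1, (F1Del ℓ m).ncard = Nat.choose (ℓ + 1) m) :=
  stmt16_general ℓ
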